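/- arXiv:1906.05837 — 16 statements merged into one kernel-verified Lean document; each statement's English description precedes it below -/
import Mathlib

section
/- The set A = 2ℤ ∪ {1} is not a minimal additive complement to any subset of ℤ; that is, there is no nonempty subset B of ℤ such that A + B = ℤ and (A \ {a}) + B ≠ ℤ for every a ∈ A. -/
open Pointwise

theorem stmt_0 :
    ¬ ∃ B : Set ℤ, B.Nonempty ∧
      ({n : ℤ | 2 ∣ n} ∪ {1}) + B = Set.univ ∧
      ∀ a ∈ ({n : ℤ | 2 ∣ n} ∪ {1} : Set ℤ),
        (({n : ℤ | 2 ∣ n} ∪ {1}) \ {a}) + B ≠ Set.univ := by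
  rintro ⟨B, ⟨b0, hb0⟩, hcov, hmin⟩
  have key : ∀ n : ℤ, ∃ a ∈ ({n : ℤ | 2 ∣ n} ∪ {1} : Set ℤ), ∃ b ∈ B, a + b = n := by
    intro n
    have hn : n ∈ ({n : ℤ | 2 ∣ n} ∪ {1}) + B := hcov ▸ Set.mem_univ n
    exact Set.mem_add.mp hn
  by_cases hodd : ∃ b ∈ B, ¬ 2 ∣ b
  · by_cases heven : ∃ b ∈ B, 2 ∣ b
    · -- B contains both parities: removing 1 still a complement
      obtain ⟨bo, hbo, hbo2⟩ := hodd
      obtain ⟨be, hbe, hbe2⟩ := heven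
      apply hmin 1 (Or.inr rfl)
      ext n
      simp only [Set.mem_univ, iff_true]
      by_cases hn : 2 ∣ n
      · refine Set.mem_add.mpr ⟨n - be, ⟨Or.inl (by simp only [Set.mem_setOf_eq]; omega), by simp; omega⟩, be, hbe, by ring⟩
      · refine Set.mem_add.mpr ⟨n - bo, ⟨Or.inl (by simp only [Set.mem_setOf_eq]; omega), by simp; omega⟩, bo, hbo, by ring⟩
    · -- B is all odd
      push_neg at heven
      have hBodd : ∀ b ∈ B, ¬ 2 ∣ b := heven
      have hB : ∀ m : ℤ, ¬ 2 ∣ m → m ∈ B := by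
        intro m hm
        obtain ⟨a, ha, b, hb, hab⟩ := key (m + 1)
        have hbodd := hBodd b hb
        have ha1 : a = 1 := by
          rcases ha with ha | ha
          · exfalso; simp only [Set.mem_setOf_eq] at ha; omega
          · exact ha
        have : b = m := by omega
        rwa [this] at hb
      apply hmin 0 (Or.inl ⟨0, rfl⟩)
      ext n
      simp only [Set.mem_univ, iff_true]
      by_cases hn : 2 ∣ n
      · exact Set.mem_add.mpr ⟨1, ⟨Or.inr rfl, by simp⟩, n - 1, hB _ (by omega), by ring⟩
      · exact Set.mem_add.mpr ⟨2, ⟨Or.inl ⟨1, rfl⟩, by simp⟩, n - 2, hB _ (by omega), by ring⟩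
  · -- B is all even
    push_neg at hodd
    have hB : ∀ m : ℤ, 2 ∣ m → m ∈ B := by
      intro m hm
      obtain ⟨a, ha, b, hb, hab⟩ := key (m + 1)
      have hbe := hodd b hb
      have ha1 : a = 1 := by
        rcases ha with ha | ha
        · exfalso; simp only [Set.mem_setOf_eq] at ha; omega
        · exact ha
      have : b = m := by omega
      rwa [this] at hb
    apply hmin 0 (Or.inl ⟨0, rfl⟩)
    ext n
    simp only [Set.mem_univ, iff_true]
    by_cases hn : 2 ∣ n
    · exact Set.mem_add.mpr ⟨2, ⟨Or.inl ⟨1, rfl⟩, by simp⟩, n - 2, hB _ (by omega), by ring⟩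
    · exact Set.mem_add.mpr ⟨1, ⟨Or.inr rfl, by simp⟩, n - 1, hB _ (by omega), by ring⟩
end

section
/- Let S be a nonempty finite subset of an abelian group G, let π : G → G₁ be a surjective group homomorphism such that π restricted to S is injective. If π(S) is a minimal complement to some subset W of G₁, then S is a minimal complement to π⁻¹(W) in G. -/
open Pointwise

theorem stmt_4 {G G₁ : Type*} [AddCommGroup G] [AddCommGroup G₁]
    (π : G →+ G₁) (hsurj : Function.Surjective π)
    (S : Set G) (hfin : S.Finite) (hne : S.Nonempty)
    (hinj : Set.InjOn π S) (W : Set G₁)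
    (hcomp : (π '' S) + W = Set.univ)
    (hmin : ∀ a ∈ π '' S, ((π '' S) \ {a}) + W ≠ Set.univ) :
    S + (π ⁻¹' W) = Set.univ ∧
      ∀ s ∈ S, (S \ {s}) + (π ⁻¹' W) ≠ Set.univ := by
  constructor
  · ext g
    simp only [Set.mem_univ, iff_true]
    have hg : π g ∈ (π '' S) + W := by rw [hcomp]; exact Set.mem_univ _
    obtain ⟨a, ⟨s, hs, rfl⟩, w, hw, hsw⟩ := hg
    refine ⟨s, hs, g - s, ?_, by show s + (g - s) = g; rw [add_comm, sub_add_cancel]⟩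
    show π (g - s) ∈ W
    have hw' : w = π g - π s := eq_sub_of_add_eq' (show π s + w = π g from hsw)
    rwa [map_sub, ← hw']
  · intro s hs hcon
    apply hmin (π s) ⟨s, hs, rfl⟩
    ext g₁
    simp only [Set.mem_univ, iff_true]
    obtain ⟨g, rfl⟩ := hsurj g₁
    have hg : g ∈ (S \ {s}) + (π ⁻¹' W) := by rw [hcon]; exact Set.mem_univ _
    obtain ⟨s', ⟨hs', hne'⟩, x, hx, rfl⟩ := hg
    exact ⟨π s', ⟨⟨s', hs', rfl⟩, fun h => hne' (hinj hs' hs h)⟩, π x, hx, show π s' + π x = π (s' + x) from (map_add π s' x).symm⟩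
end

section
/- Every nonempty finite subset of ℤⁿ (for any n ≥ 1) is a minimal complement to some subset of ℤⁿ. -/
open Pointwise

private lemma aux_d_zero (m d : ℤ) (hm : 0 ≤ m) (h1 : (6*m+1) * d ≤ 6*m)
    (h2 : -(6*m) ≤ (6*m+1) * d) : d = 0 := by
  rcases lt_trichotomy d 0 with h | h | h
  · nlinarith
  · exact h
  · nlinarith

theorem stmt_5 (n : ℕ) (hn : 1 ≤ n) (S : Set (Fin n → ℤ))
    (hfin : S.Finite) (hne : S.Nonempty) :
    ∃ B : Set (Fin n → ℤ), S + B = Set.univ ∧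
      ∀ a ∈ S, (S \ {a}) + B ≠ Set.univ := by
  classical
  obtain ⟨ι, hι⟩ := exists_injective_nat (Fin n → ℤ)
  set i0 : Fin n := ⟨0, hn⟩ with hi0
  set m : ℤ := ((hfin.toFinset.sup fun a => Finset.univ.sup fun i => (a i).natAbs : ℕ) : ℤ)
    with hmdef
  have hm0 : 0 ≤ m := Int.natCast_nonneg _
  have hm : ∀ a ∈ S, ∀ i, |a i| ≤ m := by
    intro a ha i
    have hnat : (a i).natAbs ≤ hfin.toFinset.sup fun a => Finset.univ.sup fun i => (a i).natAbs :=
      le_trans (Finset.le_sup (f := fun i => (a i).natAbs) (Finset.mem_univ i))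
        (Finset.le_sup (f := fun a => Finset.univ.sup fun i => (a i).natAbs)
          (hfin.mem_toFinset.mpr ha))
    rw [Int.abs_eq_natAbs, hmdef]
    exact_mod_cast hnat
  set t : (Fin n → ℤ) → (Fin n → ℤ) := fun a => Pi.single i0 ((6*m+1) * (ι a : ℤ)) with ht
  set F : Set (Fin n → ℤ) :=
    {x | ∃ p ∈ S, ∃ q ∈ S, q ≠ p ∧ x = t p + p - q} with hF
  refine ⟨Fᶜ, ?_, ?_⟩
  · -- coverage
    ext x
    simp only [Set.mem_univ, iff_true]
    by_contra hx
    have hbad : ∀ a ∈ S, x - a ∈ F := by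
      intro a ha
      by_contra hnb
      have : a + (x - a) ∈ S + Fᶜ := Set.add_mem_add ha (Set.mem_compl hnb)
      rw [add_sub_cancel] at this
      exact hx this
    obtain ⟨a₁, ha₁⟩ := hne
    obtain ⟨p₀, hp₀S, q₀, hq₀S, hq₀ne, heq₀⟩ := hbad a₁ ha₁
    have heval : ∀ a p q : Fin n → ℤ, x - a = t p + p - q →
        x i0 - a i0 = (6*m+1) * (ι p : ℤ) + p i0 - q i0 := by
      intro a p q h
      have h' := congrFun h i0
      simpa [ht, Pi.single_eq_same] using h'
    have hconst : ∀ a ∈ S, ∀ p q, p ∈ S → q ∈ S → x - a = t p + p - q → p = p₀ := by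
      intro a ha p q hpS hqS h
      have e1 := heval a p q h
      have e2 := heval a₁ p₀ q₀ heq₀
      have key : (6*m+1) * ((ι p : ℤ) - (ι p₀ : ℤ))
          = a₁ i0 - a i0 - p i0 + q i0 + p₀ i0 - q₀ i0 := by
        linear_combination e2 - e1
      have b1 := abs_le.mp (hm a ha i0)
      have b2 := abs_le.mp (hm a₁ ha₁ i0)
      have b3 := abs_le.mp (hm p hpS i0)
      have b4 := abs_le.mp (hm q hqS i0)
      have b5 := abs_le.mp (hm p₀ hp₀S i0)
      have b6 := abs_le.mp (hm q₀ hq₀S i0)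
      have hd : ((ι p : ℤ) - (ι p₀ : ℤ)) = 0 :=
        aux_d_zero m _ hm0 (by linarith) (by linarith)
      have : (ι p : ℤ) = (ι p₀ : ℤ) := by linarith
      exact hι (by exact_mod_cast this)
    set c : Fin n → ℤ := x - t p₀ - p₀ with hc
    have hkey : ∀ a ∈ S, a - c ∈ S ∧ a - c ≠ p₀ := by
      intro a ha
      obtain ⟨p, hpS, q, hqS, hqne, heq⟩ := hbad a ha
      have hpp₀ : p = p₀ := hconst a ha p q hpS hqS heq
      subst hpp₀
      have h2 : q = t p + p - (x - a) := by rw [heq]; abel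
      have hq : a - c = q := by rw [h2, hc]; abel
      rw [hq]; exact ⟨hqS, hqne⟩
    have hc0 : c ≠ 0 := by
      intro h
      have h2 := (hkey p₀ hp₀S).2
      rw [h, sub_zero] at h2
      exact h2 rfl
    have hmem : ∀ i : ℕ, p₀ - (i : ℤ) • c ∈ S := by
      intro i
      induction i with
      | zero => simpa using hp₀S
      | succ k ih =>
        have h2 := (hkey _ ih).1
        have e : p₀ - ((k : ℤ) + 1) • c = (p₀ - (k : ℤ) • c) - c := by
          rw [add_smul, one_smul]; abel
        rw [show ((k + 1 : ℕ) : ℤ) = (k : ℤ) + 1 by push_cast; ring, e]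
        exact h2
    have hinj : Function.Injective (fun i : ℕ => p₀ - (i : ℤ) • c) := by
      intro i j h
      have h' : p₀ - (i : ℤ) • c = p₀ - (j : ℤ) • c := h
      have h2 : (i : ℤ) • c = (j : ℤ) • c := sub_right_injective h'
      have := smul_left_injective ℤ hc0 h2
      exact_mod_cast this
    exact hfin.not_infinite (Set.infinite_of_injective_forall_mem hinj hmem)
  · -- minimality
    intro a ha hcontra
    have hw : t a + a ∈ (S \ {a}) + Fᶜ := hcontra ▸ Set.mem_univ _
    obtain ⟨a', ha', b, hb, hsum⟩ := Set.mem_add.mp hw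
    apply hb
    refine ⟨a, ha, a', ha'.1, fun h => ha'.2 h, ?_⟩
    rw [← hsum]; abel
end

section
/- Every nonempty finite subset of a free abelian group (of arbitrary, possibly infinite, rank) is a minimal complement to some subset. -/
open Pointwise

private lemma base_rep : ∀ (d : ℕ) (N : ℤ) (u : Fin d → ℤ), (∀ p, |u p| < N) →
    (∃ p, u p ≠ 0) → ∑ p, u p * N ^ (p : ℕ) ≠ 0 := by
  intro d
  induction d with
  | zero =>
    rintro N u _ ⟨p, _⟩
    exact absurd p.2 (by omega)
  | succ d ih =>
    intro N u hu hne
    have hN : 0 < N := lt_of_le_of_lt (abs_nonneg _) (hu 0)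
    rw [Fin.sum_univ_succ]
    have hstep : ∀ p : Fin d, u p.succ * N ^ ((p.succ : Fin (d + 1)) : ℕ)
        = N * (u p.succ * N ^ (p : ℕ)) := by
      intro p
      rw [Fin.val_succ, pow_succ]
      ring
    rw [Finset.sum_congr rfl (fun p _ => hstep p), ← Finset.mul_sum]
    simp only [Fin.val_zero, pow_zero, mul_one]
    by_cases h0 : u 0 = 0
    · rw [h0, zero_add]
      have hs : ∑ p : Fin d, u p.succ * N ^ (p : ℕ) ≠ 0 := by
        apply ih N (fun p => u p.succ) (fun p => hu p.succ)
        obtain ⟨p, hp⟩ := hne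
        have hp0 : p ≠ 0 := by
          intro h
          exact hp (h ▸ h0)
        obtain ⟨q, rfl⟩ := Fin.eq_succ_of_ne_zero hp0
        exact ⟨q, hp⟩
      exact mul_ne_zero (by omega) hs
    · intro hcontra
      have hdvd : N ∣ u 0 := ⟨-(∑ p : Fin d, u p.succ * N ^ (p : ℕ)), by linarith⟩
      have hle := Int.le_of_dvd (abs_pos.mpr h0) ((dvd_abs _ _).mpr hdvd)
      have := hu 0
      omega

private lemma exists_sep {I : Type*} (S : Set (I →₀ ℤ)) (hfin : S.Finite) :
    ∃ φ : (I →₀ ℤ) →+ ℤ, ∀ s ∈ S, ∀ s' ∈ S, s ≠ s' → φ s ≠ φ s' := by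
  classical
  set J : Finset I := hfin.toFinset.sup Finsupp.support with hJ
  have hsupp : ∀ s ∈ S, s.support ⊆ J := fun s hs =>
    Finset.le_sup (f := Finsupp.support) (hfin.mem_toFinset.mpr hs)
  set M : ℕ := hfin.toFinset.sup (fun f => f.support.sup fun i => (f i).natAbs) with hMdef
  have hM : ∀ s ∈ S, ∀ i, |s i| ≤ (M : ℤ) := by
    intro s hs i
    by_cases hi : i ∈ s.support
    · have h1 : (s i).natAbs ≤ s.support.sup (fun i => (s i).natAbs) := Finset.le_sup (f := fun i => (s i).natAbs) hi
      have h2 : s.support.sup (fun i => (s i).natAbs) ≤ M :=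
        Finset.le_sup (f := fun f => f.support.sup fun i => (f i).natAbs)
          (hfin.mem_toFinset.mpr hs)
      have h3 : (s i).natAbs ≤ M := le_trans h1 h2
      rw [Int.abs_eq_natAbs]
      exact_mod_cast h3
    · rw [Finsupp.notMem_support_iff.mp hi]
      simp
  set N : ℤ := 2 * (M : ℤ) + 1 with hNdef
  set e := J.equivFin with he
  set w : I → ℤ := fun i => if h : i ∈ J then N ^ ((e ⟨i, h⟩ : Fin J.card) : ℕ) else 0 with hw
  refine ⟨AddMonoidHom.mk' (fun x => ∑ j ∈ J, x j * w j) ?_, ?_⟩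
  · intro x y
    simp [Finsupp.add_apply, add_mul, Finset.sum_add_distrib]
  · intro s hs s' hs' hne heq
    simp only [AddMonoidHom.mk'_apply] at heq
    set v : I →₀ ℤ := s - s' with hv
    have hφv : ∑ j ∈ J, v j * w j = 0 := by
      simp only [hv, Finsupp.sub_apply, sub_mul, Finset.sum_sub_distrib]
      rw [heq]
      ring
    have hre : ∑ j ∈ J, v j * w j = ∑ p : Fin J.card, v (e.symm p : I) * N ^ (p : ℕ) := by
      rw [← Finset.sum_coe_sort J (fun j => v j * w j)]
      refine Fintype.sum_equiv e _ _ ?_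
      intro j
      simp only [hw]
      rw [dif_pos j.2]
      simp
    refine base_rep J.card N (fun p => v (e.symm p : I)) ?_ ?_ (by rw [← hre]; exact hφv)
    · intro p
      show |v (e.symm p : I)| < N
      have h1 := hM s hs (e.symm p : I)
      have h2 := hM s' hs' (e.symm p : I)
      have : v (e.symm p : I) = s (e.symm p : I) - s' (e.symm p : I) := by
        simp [hv]
      rw [this]
      have hb1 := abs_le.mp h1
      have hb2 := abs_le.mp h2
      rw [abs_lt]
      constructor <;> omega
    · have hvne : v ≠ 0 := sub_ne_zero_of_ne hne
      obtain ⟨j, hj⟩ := Finsupp.ne_iff.mp hvne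
      have hj' : v j ≠ 0 := by simpa using hj
      have hjJ : j ∈ J := by
        have hmem : j ∈ v.support := Finsupp.mem_support_iff.mpr hj'
        have hsub : v.support ⊆ s.support ∪ s'.support := Finsupp.support_sub
        rcases Finset.mem_union.mp (hsub hmem) with h | h
        exacts [hsupp s hs h, hsupp s' hs' h]
      exact ⟨e ⟨j, hjJ⟩, by simpa using hj'⟩

private lemma int_construction (T : Set ℤ) (hfin : T.Finite) (hne : T.Nonempty) :
    ∃ (P : ℤ) (C : Set ℤ),
      (∀ r : ℤ, ∃ t ∈ T, r - t ∈ C) ∧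
      (∀ a ∈ T, ∀ t ∈ T, t ≠ a → a * P + a - t ∉ C) := by
  obtain ⟨lo, hloT, hlo⟩ := Set.exists_min_image T id hfin hne
  obtain ⟨hi, hhiT, hhi⟩ := Set.exists_max_image T id hfin hne
  simp only [id] at hlo hhi
  set m : ℤ := hi - lo with hm
  have hm0 : 0 ≤ m := by
    have := hlo hi hhiT
    omega
  have hmb : ∀ a ∈ T, ∀ b ∈ T, a - b ≤ m ∧ -m ≤ a - b := by
    intro a ha b hb
    have h1 := hlo a ha
    have h2 := hlo b hb
    have h3 := hhi a ha
    have h4 := hhi b hb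
    omega
  set P : ℤ := 3 * m + 1 with hP
  have hP0 : 0 < P := by omega
  refine ⟨P, {x | ∀ t ∈ T, ∀ t' ∈ T, t' ≠ t → x ≠ t * P + t - t'}, ?_, ?_⟩
  · intro r
    by_contra hc
    push_neg at hc
    have hc' : ∀ t ∈ T, ∃ u, u ∈ T ∧ ∃ g, g ∈ T ∧ g ≠ u ∧ r - t = u * P + u - g := by
      intro t ht
      have h2 := hc t ht
      simp only [Set.mem_setOf_eq] at h2
      push_neg at h2
      obtain ⟨u, hu, g, hg, hgu, heq⟩ := h2
      exact ⟨u, hu, g, hg, hgu, heq⟩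
    choose u hu g hg hgu heq using hc'
    have huc : ∀ t (ht : t ∈ T), ∀ t' (ht' : t' ∈ T), u t ht = u t' ht' := by
      intro t ht t' ht'
      by_contra hne2
      have e1 := heq t ht
      have e2 := heq t' ht'
      have b1 := hmb (u t ht) (hu t ht) (u t' ht') (hu t' ht')
      have b2 := hmb (g t ht) (hg t ht) (g t' ht') (hg t' ht')
      have b3 := hmb t ht t' ht'
      have key : (u t ht - u t' ht') * P
          = (t' - t) + (g t ht - g t' ht') - (u t ht - u t' ht') := by
        rw [sub_mul]
        linarith [e1, e2]
      rcases lt_or_gt_of_ne hne2 with h | h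
      · have hle : (u t ht - u t' ht') * P ≤ (-1) * P :=
          mul_le_mul_of_nonneg_right (by omega) (by omega)
        have hb1 := b1.1
        have hb2 := b2.2
        have hb3 := b3.1
        linarith
      · have hle : 1 * P ≤ (u t ht - u t' ht') * P :=
          mul_le_mul_of_nonneg_right (by omega) (by omega)
        have hb1 := b1.2
        have hb2 := b2.1
        have hb3 := b3.2
        linarith
    obtain ⟨t₀, ht₀⟩ := hne
    set u₀ : ℤ := u t₀ ht₀ with hu₀
    have hu₀T : u₀ ∈ T := hu t₀ ht₀
    set δ : ℤ := r - u₀ * P - u₀ with hδ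
    have hgval : ∀ t (ht : t ∈ T), g t ht = t - δ := by
      intro t ht
      have e1 := heq t ht
      rw [huc t ht t₀ ht₀] at e1
      rw [hδ]
      linarith [e1]
    have hshift : ∀ t ∈ T, t - δ ∈ T := by
      intro t ht
      rw [← hgval t ht]
      exact hg t ht
    have hδ0 : δ ≠ 0 := by
      intro h0
      have h1 := hgval u₀ hu₀T
      have h2 := hgu u₀ hu₀T
      rw [huc u₀ hu₀T t₀ ht₀] at h2
      rw [h1, h0, sub_zero] at h2
      exact h2 rfl
    rcases lt_trichotomy δ 0 with h | h | h
    · have := hhi (hi - δ) (hshift hi hhiT)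
      omega
    · exact hδ0 h
    · have := hlo (lo - δ) (hshift lo hloT)
      omega
  · intro a ha t ht hta hmem
    exact hmem a ha t ht hta rfl

theorem stmt_6 (I : Type*) (S : Set (I →₀ ℤ)) (hfin : S.Finite) (hne : S.Nonempty) :
    ∃ B : Set (I →₀ ℤ), S + B = Set.univ ∧
      ∀ a ∈ S, (S \ {a}) + B ≠ Set.univ := by
  obtain ⟨φ, hφ⟩ := exists_sep S hfin
  obtain ⟨P, C, hcov, hess⟩ := int_construction (φ '' S) (hfin.image φ) (hne.image φ)
  refine ⟨φ ⁻¹' C, ?_, ?_⟩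
  · apply Set.eq_univ_of_forall
    intro g
    obtain ⟨t, ht, htc⟩ := hcov (φ g)
    obtain ⟨s, hs, rfl⟩ := ht
    rw [Set.mem_add]
    refine ⟨s, hs, g - s, ?_, by abel⟩
    simp only [Set.mem_preimage, map_sub]
    exact htc
  · intro a ha hcon
    have hg : (P + 1) • a ∈ (S \ {a}) + φ ⁻¹' C := hcon ▸ Set.mem_univ _
    rw [Set.mem_add] at hg
    obtain ⟨s, hs, b, hb, hsum⟩ := hg
    have hsa : s ≠ a := by
      intro h
      exact hs.2 (by simp [h])
    have hbv : φ b = φ a * P + φ a - φ s := by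
      have hbeq : b = (P + 1) • a - s := by
        rw [← hsum]; abel
      rw [hbeq, map_sub, map_zsmul, smul_eq_mul]
      ring
    exact hess (φ a) ⟨a, ha, rfl⟩ (φ s) ⟨s, hs.1, rfl⟩ (hφ s hs.1 a ha hsa) (hbv ▸ hb)
end

section
/- Let G be a group and S a nonempty finite subset of G. Then every right complement of S in G contains a minimal right complement of S; i.e., if S·C = G then there exists C' ⊆ C with S·C' = G and S·(C' \ {c}) ≠ G for every c ∈ C'. -/
open Pointwise

/-!
By Zorn's lemma it suffices that the intersection of a nonempty chain of right complements of `S`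
is again one. Now `g ∈ S * D` exactly when the finite set `{s⁻¹ * g | s ∈ S}` meets `D`, and a
finite set meeting every member of a chain of sets meets its intersection: otherwise the
complements of the members, which form a directed family, would cover it, hence one of them alone
would.
-/

theorem Set.Finite.inter_sInter_nonempty_of_isChain {α : Type*} {T : Set α} (hT : T.Finite)
    {c : Set (Set α)} (hc : IsChain (· ⊆ ·) c) (hne : c.Nonempty)
    (h : ∀ D ∈ c, (T ∩ D).Nonempty) : (T ∩ ⋂₀ c).Nonempty := by
  by_contra hdisj
  have hcover : T ⊆ ⋃₀ (compl '' c) := by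
    intro x hx
    obtain ⟨D, hD, hxD⟩ : ∃ D ∈ c, x ∉ D := by
      by_contra! hall
      exact hdisj ⟨x, hx, Set.mem_sInter.2 hall⟩
    exact ⟨Dᶜ, ⟨D, hD, rfl⟩, hxD⟩
  have hdir : DirectedOn (· ⊆ ·) (compl '' c) :=
    (hc.symm.image_of_map_rel _ _ compl fun _ _ h ↦ Set.compl_subset_compl.2 h).directedOn
  obtain ⟨_, ⟨D, hD, rfl⟩, hTD⟩ :=
    hdir.exists_mem_subset_of_finite_of_subset_sUnion (hne.image _) hT hcover
  obtain ⟨x, hxT, hxD⟩ := h D hD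
  exact hTD hxT hxD

theorem Set.mem_mul_iff_image_inter_nonempty {G : Type*} [Group G] {S D : Set G} {g : G} :
    g ∈ S * D ↔ ((fun s ↦ s⁻¹ * g) '' S ∩ D).Nonempty := by
  constructor
  · rintro ⟨s, hs, x, hx, rfl⟩
    exact ⟨x, ⟨s, hs, inv_mul_cancel_left s x⟩, hx⟩
  · rintro ⟨_, ⟨s, hs, rfl⟩, hx⟩
    exact ⟨s, hs, _, hx, mul_inv_cancel_left s g⟩

theorem Set.Finite.mul_sInter_eq_univ_of_isChain {G : Type*} [Group G] {S : Set G}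
    (hS : S.Finite) {c : Set (Set G)} (hc : IsChain (· ⊆ ·) c) (hne : c.Nonempty)
    (h : ∀ D ∈ c, S * D = Set.univ) : S * ⋂₀ c = Set.univ :=
  Set.eq_univ_of_forall fun g ↦ Set.mem_mul_iff_image_inter_nonempty.2 <|
    (hS.image _).inter_sInter_nonempty_of_isChain hc hne fun D hD ↦
      Set.mem_mul_iff_image_inter_nonempty.1 (h D hD ▸ Set.mem_univ g)

theorem stmt_7_general {G : Type*} [Group G] (S : Set G) (hfin : S.Finite)
    (C : Set G) (hC : S * C = Set.univ) :
    ∃ C' ⊆ C, S * C' = Set.univ ∧ ∀ c ∈ C', S * (C' \ {c}) ≠ Set.univ := by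
  obtain ⟨C', hC'C, hmin⟩ := zorn_superset_nonempty {D | S * D = Set.univ}
    (fun c hcS hc hne ↦
      ⟨⋂₀ c, hfin.mul_sInter_eq_univ_of_isChain hc hne hcS, fun _ ↦ Set.sInter_subset_of_mem⟩)
    C hC
  exact ⟨C', hC'C, hmin.prop, fun c hc hcover ↦ (hmin.le_of_le hcover Set.sdiff_subset hc).2 rfl⟩

theorem stmt_7 {G : Type*} [Group G] (S : Set G) (hfin : S.Finite) (hne : S.Nonempty)
    (C : Set G) (hC : S * C = Set.univ) :
    ∃ C' ⊆ C, S * C' = Set.univ ∧ ∀ c ∈ C', S * (C' \ {c}) ≠ Set.univ :=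
  stmt_7_general S hfin C hC
end

section
/- Every nonempty finite subset A of a free abelian group G is part of a co-minimal pair: there exists a subset B of G such that A + B = G, (A \ {a}) + B ≠ G for all a ∈ A, and A + (B \ {b}) ≠ G for all b ∈ B. -/
/-!
Pick a homomorphism `ψ : G →+ ℤ` that is injective on `A` (finitely many nonzero differences
`a - a'` can be kept off its kernel at once) and an integer `D > 2 (max ψ(A) - min ψ(A))`.
Make `D • a` the anchor of `a`, and let `C` avoid every shift `c` with `b' + c = D • b`,
`b' ≠ b`, so that the anchor `D • a` is reached from `A + C` only through `a`. Comparing sizes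
under `ψ` shows that `A + C` is still everything. By Zorn's lemma `C` contains a minimal
complement `B` of `A`, and `B` is co-minimal with `A`: `(A \ {a}) + B` misses `D • a`.
-/

open Pointwise Set

theorem Int.mul_add_ne_zero_of_abs_lt {N a b : ℤ} (ha : a ≠ 0) (hb : |b| < N) :
    N * a + b ≠ 0 := by
  intro h
  have hN : 0 < N := (abs_nonneg b).trans_lt hb
  have habs : N * |a| = |b| := by
    rw [← abs_of_pos hN, ← abs_mul, eq_neg_of_add_eq_zero_left h, abs_neg]
  linarith [mul_le_mul_of_nonneg_left (Int.one_le_abs ha) hN.le]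

section AddGroup

variable {G : Type*} [AddGroup G]

def IsCoMinimalPair (A B : Set G) : Prop :=
  A + B = univ ∧ (∀ a ∈ A, (A \ {a}) + B ≠ univ) ∧ ∀ b ∈ B, A + (B \ {b}) ≠ univ

theorem add_sInter_eq_univ_of_isChain {A : Set G} (hA : A.Finite) {ch : Set (Set G)}
    (hch : IsChain (· ⊆ ·) ch) (hne : ch.Nonempty) (hcov : ∀ D ∈ ch, A + D = univ) :
    A + ⋂₀ ch = univ := by
  obtain ⟨D₀, hD₀⟩ := hne
  refine eq_univ_of_forall fun g => by_contra fun hg => ?_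
  have hmiss : ∀ a, ∃ D ∈ ch, a ∈ A → -a + g ∉ D := by
    intro a
    by_cases ha : a ∈ A
    · have : -a + g ∉ ⋂₀ ch := fun h =>
        hg (mem_add.2 ⟨a, ha, -a + g, h, add_neg_cancel_left a g⟩)
      obtain ⟨D, hD, h⟩ := not_forall₂.1 this
      exact ⟨D, hD, fun _ => h⟩
    · exact ⟨D₀, hD₀, fun h => (ha h).elim⟩
  choose D hDch hD using hmiss
  -- the sets `D a` lie in a chain, so finitely many of them have a smallest one
  have hrange : IsChain (· ⊇ ·) (range D) := (hch.mono (range_subset_iff.2 hDch)).symm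
  have hdir : Directed (· ⊇ ·) D := directedOn_range.1 hrange.directedOn
  obtain ⟨z, hz⟩ := hdir.finset_le hA.toFinset
  obtain ⟨a, ha, d, hd, rfl⟩ := mem_add.1 (hcov _ (hDch z) ▸ mem_univ g)
  exact hD a ha (by simpa using hz a (hA.mem_toFinset.2 ha) hd)

theorem exists_subset_minimal_add_eq_univ {A C : Set G} (hA : A.Finite) (hC : A + C = univ) :
    ∃ B ⊆ C, A + B = univ ∧ ∀ b ∈ B, A + (B \ {b}) ≠ univ := by
  have hchain : ∀ ch ⊆ {D | D ⊆ C ∧ A + D = univ}, IsChain (· ⊆ ·) ch → ch.Nonempty →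
      ∃ lb ∈ {D | D ⊆ C ∧ A + D = univ}, ∀ D ∈ ch, lb ⊆ D := by
    rintro ch hchS hch ⟨D₀, hD₀⟩
    refine ⟨⋂₀ ch, ⟨(sInter_subset_of_mem hD₀).trans (hchS hD₀).1, ?_⟩,
      fun D hD => sInter_subset_of_mem hD⟩
    exact add_sInter_eq_univ_of_isChain hA hch ⟨D₀, hD₀⟩ fun D hD => (hchS hD).2
  obtain ⟨B, hBC, hB⟩ := zorn_superset_nonempty _ hchain C ⟨subset_rfl, hC⟩
  refine ⟨B, hBC, hB.prop.2, fun b hb hcov => ?_⟩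
  exact (hB.le_of_le ⟨sdiff_subset.trans hB.prop.1, hcov⟩ sdiff_subset hb).2 rfl

theorem exists_isCoMinimalPair_of_add_eq_univ {A C : Set G} (hA : A.Finite)
    (hC : A + C = univ) (hpriv : ∀ a ∈ A, ∃ g, ∀ a' ∈ A, ∀ c ∈ C, a' + c = g → a' = a) :
    ∃ B, IsCoMinimalPair A B := by
  obtain ⟨B, hBC, hB, hBmin⟩ := exists_subset_minimal_add_eq_univ hA hC
  refine ⟨B, hB, fun a ha hcov => ?_, hBmin⟩
  obtain ⟨g, hg⟩ := hpriv a ha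
  obtain ⟨a', ⟨ha', hne⟩, b, hb, h⟩ := mem_add.1 (hcov ▸ mem_univ g)
  exact hne (hg a' ha' b (hBC hb) h)

end AddGroup

section AddCommGroup

variable {G : Type*} [AddCommGroup G]

def anchorShifts (A : Set G) (D : ℤ) : Set G :=
  {c | ∃ b ∈ A, ∃ b' ∈ A, b' ≠ b ∧ b' + c = D • b}

section Anchors

variable {A : Set G} {ψ : G →+ ℤ} {α β : G} {D : ℤ}

theorem zsmul_sub_notMem_anchorShifts (hψ : InjOn ψ A)
    (hbounds : ∀ a ∈ A, ψ α ≤ ψ a ∧ ψ a ≤ ψ β) (hD : ψ β - ψ α < D) {b : G} (hb : b ∈ A) :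
    D • b - b ∉ anchorShifts A D := by
  rintro ⟨c, hc, b', hb', hne, h⟩
  have h' : ψ b' - ψ b = D * (ψ c - ψ b) := by
    have := congrArg ψ h
    simp only [map_add, map_sub, map_zsmul, smul_eq_mul] at this
    linarith
  obtain ⟨hb₀, hb₁⟩ := hbounds b hb
  obtain ⟨hb'₀, hb'₁⟩ := hbounds b' hb'
  have hb'b : ψ b' = ψ b := by
    have := Int.eq_zero_of_abs_lt_dvd ⟨_, h'⟩ (abs_lt.2 ⟨by linarith, by linarith⟩)
    linarith
  have hcb : ψ c = ψ b := by
    rw [hb'b, sub_self, zero_eq_mul] at h'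
    exact sub_eq_zero.1 (h'.resolve_left (by linarith))
  exact hne (hψ hb' hc (hb'b.trans hcb.symm))

theorem exists_zsmul_eq_of_sub_mem_anchorShifts (hψ : InjOn ψ A) (hα : α ∈ A)
    (hbounds : ∀ a ∈ A, ψ α ≤ ψ a ∧ ψ a ≤ ψ β) (hD : 2 * (ψ β - ψ α) < D) {y : G}
    (hyα : y - α ∈ anchorShifts A D) (hyβ : y - β ∈ anchorShifts A D) : ∃ b ∈ A, D • b = y := by
  obtain ⟨b₁, hb₁, b₁', hb₁', -, h₁⟩ := hyα
  obtain ⟨b₂, -, b₂', hb₂', -, h₂⟩ := hyβ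
  have h' : (ψ b₁' - ψ α) + (ψ β - ψ b₂') = D * (ψ b₁ - ψ b₂) := by
    have e₁ := congrArg ψ h₁
    have e₂ := congrArg ψ h₂
    simp only [map_add, map_sub, map_zsmul, smul_eq_mul] at e₁ e₂
    linarith
  obtain ⟨hb₁'₀, hb₁'₁⟩ := hbounds b₁' hb₁'
  obtain ⟨hb₂'₀, hb₂'₁⟩ := hbounds b₂' hb₂'
  -- the left side of `h'` lies in `[0, 2 (ψ β - ψ α)]`, so it vanishes and forces `b₁' = α`
  have hψb₁' : ψ b₁' = ψ α := by
    have := Int.eq_zero_of_abs_lt_dvd ⟨_, h'⟩ (abs_lt.2 ⟨by linarith, by linarith⟩)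
    linarith
  rw [hψ hb₁' hα hψb₁', add_sub_cancel] at h₁
  exact ⟨b₁, hb₁, h₁.symm⟩

theorem add_compl_anchorShifts_eq_univ (hψ : InjOn ψ A) (hα : α ∈ A) (hβ : β ∈ A)
    (hbounds : ∀ a ∈ A, ψ α ≤ ψ a ∧ ψ a ≤ ψ β) (hD : 2 * (ψ β - ψ α) < D) :
    A + (anchorShifts A D)ᶜ = univ := by
  refine eq_univ_of_forall fun y => ?_
  have hsplit : ∀ a ∈ A, y - a ∉ anchorShifts A D → y ∈ A + (anchorShifts A D)ᶜ :=
    fun a ha h => mem_add.2 ⟨a, ha, y - a, h, add_sub_cancel _ _⟩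
  by_cases hy : ∃ b ∈ A, D • b = y
  · obtain ⟨b, hb, rfl⟩ := hy
    have hD' : ψ β - ψ α < D := by linarith [hbounds α hα]
    exact mem_add.2 ⟨b, hb, D • b - b, zsmul_sub_notMem_anchorShifts hψ hbounds hD' hb,
      add_sub_cancel _ _⟩
  · by_contra hcov
    exact hy (exists_zsmul_eq_of_sub_mem_anchorShifts hψ hα hbounds hD
      (not_not.1 (mt (hsplit α hα) hcov)) (not_not.1 (mt (hsplit β hβ) hcov)))

end Anchors

theorem exists_addMonoidHom_forall_ne_zero (hsep : ∀ x : G, x ≠ 0 → ∃ f : G →+ ℤ, f x ≠ 0)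
    (F : Finset G) (hF : ∀ x ∈ F, x ≠ 0) : ∃ ψ : G →+ ℤ, ∀ x ∈ F, ψ x ≠ 0 := by
  classical
  induction F using Finset.induction_on with
  | empty => exact ⟨0, by simp⟩
  | insert x F _ ih =>
    obtain ⟨ψ, hψ⟩ := ih fun y hy => hF y (Finset.mem_insert_of_mem hy)
    by_cases hψx : ψ x ≠ 0
    · exact ⟨ψ, Finset.forall_mem_insert _ _ _ |>.2 ⟨hψx, hψ⟩⟩
    obtain ⟨f, hf⟩ := hsep x (hF x (Finset.mem_insert_self x F))
    obtain ⟨N, hN⟩ := (F.image fun y => |f y|).exists_le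
    refine ⟨(N + 1) • ψ + f, Finset.forall_mem_insert _ _ _ |>.2 ⟨?_, fun y hy => ?_⟩⟩
    · simpa [not_not.1 hψx] using hf
    · simpa using Int.mul_add_ne_zero_of_abs_lt (hψ y hy)
        (Int.lt_add_one_of_le (hN _ (Finset.mem_image_of_mem _ hy)))

theorem exists_addMonoidHom_injOn (hsep : ∀ x : G, x ≠ 0 → ∃ f : G →+ ℤ, f x ≠ 0)
    {A : Set G} (hA : A.Finite) : ∃ ψ : G →+ ℤ, InjOn ψ A := by
  classical
  obtain ⟨ψ, hψ⟩ := exists_addMonoidHom_forall_ne_zero hsep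
    ((hA.sub hA).toFinset.filter (· ≠ 0)) fun x hx => (Finset.mem_filter.1 hx).2
  refine ⟨ψ, fun a ha a' ha' h => sub_eq_zero.1 (by_contra fun hne => hψ (a - a') ?_ ?_)⟩
  · exact Finset.mem_filter.2 ⟨(hA.sub hA).mem_toFinset.2 (sub_mem_sub ha ha'), hne⟩
  · rw [map_sub, h, sub_self]

theorem exists_isCoMinimalPair (hsep : ∀ x : G, x ≠ 0 → ∃ f : G →+ ℤ, f x ≠ 0)
    {A : Set G} (hA : A.Finite) (hne : A.Nonempty) : ∃ B, IsCoMinimalPair A B := by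
  obtain ⟨ψ, hψ⟩ := exists_addMonoidHom_injOn hsep hA
  obtain ⟨α, hα, hαmin⟩ := exists_min_image A ψ hA hne
  obtain ⟨β, hβ, hβmax⟩ := exists_max_image A ψ hA hne
  set D := 2 * (ψ β - ψ α) + 1
  have hcov : A + (anchorShifts A D)ᶜ = univ := add_compl_anchorShifts_eq_univ hψ hα hβ
    (fun a ha => ⟨hαmin a ha, hβmax a ha⟩) (lt_add_one _)
  exact exists_isCoMinimalPair_of_add_eq_univ hA hcov fun a ha =>
    ⟨D • a, fun a' ha' c hc h => by_contra fun hne => hc ⟨a, ha, a', ha', hne, h⟩⟩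

end AddCommGroup

theorem stmt_8 (I : Type*) (A : Set (I →₀ ℤ)) (hfin : A.Finite) (hne : A.Nonempty) :
    ∃ B : Set (I →₀ ℤ), A + B = Set.univ ∧
      (∀ a ∈ A, (A \ {a}) + B ≠ Set.univ) ∧
      (∀ b ∈ B, A + (B \ {b}) ≠ Set.univ) := by
  refine exists_isCoMinimalPair (fun x hx => ?_) hfin hne
  obtain ⟨i, hi⟩ := DFunLike.ne_iff.1 hx
  exact ⟨Finsupp.applyAddHom i, hi⟩
end

section
/- Let G be a group and S = {g, h} a two-element subset of G. Then S is a minimal left complement to G \ {g⁻¹h}; that is, S·(G \ {g⁻¹h}) = G, but no proper nonempty subset of S has this property. -/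
open Pointwise

theorem stmt_9 {G : Type*} [Group G] (g h : G) (hgh : g ≠ h) :
    ({g, h} : Set G) * (Set.univ \ {g⁻¹ * h}) = Set.univ ∧
    ∀ a ∈ ({g, h} : Set G),
      (({g, h} : Set G) \ {a}) * (Set.univ \ {g⁻¹ * h}) ≠ Set.univ := by
  constructor
  · ext x
    simp only [Set.mem_mul, Set.mem_univ, iff_true, Set.mem_diff,
      Set.mem_insert_iff, Set.mem_singleton_iff]
    by_cases hx : x = h
    · refine ⟨h, Or.inr rfl, h⁻¹ * x, ⟨trivial, ?_⟩, by group⟩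
      subst hx
      simp only [inv_mul_cancel]
      intro e
      exact hgh (by rw [eq_comm, inv_mul_eq_one] at e; exact e)
    · refine ⟨g, Or.inl rfl, g⁻¹ * x, ⟨trivial, ?_⟩, by group⟩
      intro e
      exact hx (by have := congrArg (fun y => g * y) e; simpa using this)
  · rintro a ha H
    rcases ha with rfl | rfl
    · have : h * (a⁻¹ * h) ∈ (({a, h} : Set G) \ {a}) * (Set.univ \ {a⁻¹ * h}) := by
        rw [H]; trivial
      obtain ⟨p, hp, q, hq, hpq⟩ := this
      simp only [Set.mem_diff, Set.mem_insert_iff, Set.mem_singleton_iff] at hp hq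
      have hph : p = h := by rcases hp.1 with rfl | rfl; exact absurd rfl hp.2; rfl
      subst hph
      apply hq.2
      have := mul_left_cancel hpq
      exact this.symm ▸ rfl
    · have : a ∈ (({g, a} : Set G) \ {a}) * (Set.univ \ {g⁻¹ * a}) := by
        rw [H]; trivial
      obtain ⟨p, hp, q, hq, hpq⟩ := this
      simp only [Set.mem_diff, Set.mem_insert_iff, Set.mem_singleton_iff] at hp hq
      have hpg : p = g := by rcases hp.1 with rfl | rfl; rfl; exact absurd rfl hp.2
      subst hpg
      apply hq.2
      rw [← hpq]; group
end

section
/- Let G be a group with |G| ≥ 3k + 1 for some integer k ≥ 1, let g₁, …, g_k be k distinct elements of G, and let X = G \ {g₁, …, g_k}. Then X is not a minimal left complement to any nonempty subset S of G: whenever X·S = G there exists x ∈ X with (X \ {x})·S = G. -/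
/-!
Suppose every `x ∈ X` is essential, i.e. `(X \ {x}) * S ≠ G`. Then some `w x` has all its
`S`-factorisations `w x = y * s` with `y ∈ X` going through `y = x`; since `w x ∈ X * S`, the map
`x ↦ w x` is injective. Fix `s₀ ≠ s₁` in `S` (there are two, as `X * S = G` and `X ≠ G`). For each
`x ∈ X`, either `w x * s₀⁻¹ = x`, and then `x * s₀ * s₁⁻¹ = w x * s₁⁻¹ ∉ X`; or `w x * s₀⁻¹ ∉ X`.
Both alternatives inject into `Xᶜ`, so `|G| = |X| + |Xᶜ| ≤ 3 |Xᶜ|`.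
-/

open Pointwise Cardinal Set

namespace Set

variable {G : Type*} [Group G] {X S : Set G}

theorem exists_mul_inv_mem_imp_eq_of_diff_singleton_mul_ne_univ {x : G}
    (h : (X \ {x}) * S ≠ univ) : ∃ w : G, ∀ s ∈ S, w * s⁻¹ ∈ X → w * s⁻¹ = x := by
  obtain ⟨w, hw⟩ := ne_univ_iff_exists_notMem _ |>.mp h
  refine ⟨w, fun s hs hX => ?_⟩
  by_contra hne
  exact hw ⟨w * s⁻¹, ⟨hX, hne⟩, s, hs, inv_mul_cancel_right w s⟩

theorem eq_of_mul_inv_mem_imp_eq (hXS : X * S = univ) {w x y : G}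
    (hx : ∀ s ∈ S, w * s⁻¹ ∈ X → w * s⁻¹ = x) (hy : ∀ s ∈ S, w * s⁻¹ ∈ X → w * s⁻¹ = y) :
    x = y := by
  obtain ⟨a, ha, s, hs, has⟩ : w ∈ X * S := hXS ▸ mem_univ w
  have hwa : w * s⁻¹ = a := by rw [← has, mul_inv_cancel_right]
  exact (hx s hs (hwa ▸ ha)).symm.trans (hy s hs (hwa ▸ ha))

theorem nontrivial_of_mul_eq_univ (hXS : X * S = univ) (hX : X ≠ univ) : S.Nontrivial := by
  obtain ⟨t, ht⟩ := ne_univ_iff_exists_notMem X |>.mp hX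
  obtain ⟨-, -, s₀, hs₀, -⟩ : (1 : G) ∈ X * S := hXS ▸ mem_univ 1
  obtain ⟨y, hy, s, hs, hys⟩ : t * s₀ ∈ X * S := hXS ▸ mem_univ _
  refine ⟨s, hs, s₀, hs₀, fun hss₀ => ht ?_⟩
  rw [hss₀] at hys
  exact mul_right_cancel hys ▸ hy

theorem mk_le_two_mul_mk_compl (hXS : X * S = univ) {s₀ s₁ : G} (hs₀ : s₀ ∈ S) (hs₁ : s₁ ∈ S)
    (hne : s₀ ≠ s₁) (hmin : ∀ x ∈ X, (X \ {x}) * S ≠ univ) : #X ≤ 2 * #(Xᶜ : Set G) := by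
  choose! w hw using fun x hx => exists_mul_inv_mem_imp_eq_of_diff_singleton_mul_ne_univ (hmin x hx)
  set A := {x ∈ X | w x * s₀⁻¹ = x}
  set B := {x ∈ X | w x * s₀⁻¹ ∉ X}
  have hAB : X ⊆ A ∪ B := fun x hx => by
    by_cases h : w x * s₀⁻¹ ∈ X
    · exact Or.inl ⟨hx, hw x hx s₀ hs₀ h⟩
    · exact Or.inr ⟨hx, h⟩
  have hA : A ⊆ (· * (s₁ * s₀⁻¹)) '' Xᶜ := by
    rintro x ⟨hx, hwx⟩
    rw [mul_inv_eq_iff_eq_mul] at hwx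
    refine ⟨x * (s₀ * s₁⁻¹), fun hX => hne ?_, by group⟩
    have := hw x hx s₁ hs₁
    rw [hwx, mul_assoc] at this
    simpa [mul_inv_eq_one] using this hX
  have hB : InjOn (fun x => w x * s₀⁻¹) B := fun x hx y hy hxy =>
    eq_of_mul_inv_mem_imp_eq hXS (hw x hx.1) (mul_right_cancel hxy ▸ hw y hy.1)
  calc #X ≤ #A + #B := (mk_le_mk_of_subset hAB).trans (mk_union_le A B)
    _ ≤ #(Xᶜ : Set G) + #(Xᶜ : Set G) := by
      gcongr
      · exact (mk_le_mk_of_subset hA).trans mk_image_le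
      · rw [← mk_image_eq_of_injOn _ _ hB]
        exact mk_le_mk_of_subset (image_subset_iff.mpr fun x hx => hx.2)
    _ = 2 * #(Xᶜ : Set G) := (two_mul _).symm

theorem exists_diff_singleton_mul_eq_univ (hXS : X * S = univ) (hX : X ≠ univ)
    (hcard : 3 * #(Xᶜ : Set G) < #G) : ∃ x ∈ X, (X \ {x}) * S = univ := by
  by_contra! hmin
  obtain ⟨s₀, hs₀, s₁, hs₁, hne⟩ := nontrivial_of_mul_eq_univ hXS hX
  refine hcard.not_ge ?_
  calc #G = #X + #(Xᶜ : Set G) := (mk_sum_compl X).symm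
    _ ≤ 2 * #(Xᶜ : Set G) + #(Xᶜ : Set G) := by
      gcongr
      exact mk_le_two_mul_mk_compl hXS hs₀ hs₁ hne hmin
    _ = 3 * #(Xᶜ : Set G) := by ring

end Set

theorem stmt_10_general {G : Type*} [Group G] (k : ℕ) (hk : 1 ≤ k)
    (T : Finset G) (hT : T.card = k)
    (hG : (3 * k + 1 : Cardinal) ≤ Cardinal.mk G)
    (S : Set G)
    (hcomp : (Set.univ \ (T : Set G)) * S = Set.univ) :
    ∃ x ∈ Set.univ \ (T : Set G),
      ((Set.univ \ (T : Set G)) \ {x}) * S = Set.univ := by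
  rw [← compl_eq_univ_sdiff] at hcomp ⊢
  refine exists_diff_singleton_mul_eq_univ hcomp (compl_ne_univ.mpr ?_) ?_
  · exact Finset.coe_nonempty.mpr (Finset.card_pos.mp (hT ▸ hk))
  · rw [compl_compl, Finset.coe_sort_coe, mk_coe_finset, hT]
    have hG' : ((3 * k : ℕ) : Cardinal) + 1 ≤ #G := by exact_mod_cast hG
    exact_mod_cast natCast_add_one_le_iff.mp hG'

theorem stmt_10 {G : Type*} [Group G] (k : ℕ) (hk : 1 ≤ k)
    (T : Finset G) (hT : T.card = k)
    (hG : (3 * k + 1 : Cardinal) ≤ Cardinal.mk G)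
    (S : Set G) (hS : S.Nonempty)
    (hcomp : (Set.univ \ (T : Set G)) * S = Set.univ) :
    ∃ x ∈ Set.univ \ (T : Set G),
      ((Set.univ \ (T : Set G)) \ {x}) * S = Set.univ :=
  stmt_10_general k hk T hT hG S hcomp
end

section
/- If X is a proper subset of a finite group G with |X| ≥ (2/3)|G| + 1/3 (equivalently 3|X| ≥ 2|G| + 1) and |G| ≥ 4, then X is not part of any co-minimal pair in G. -/
open Pointwise

theorem stmt_11 {G : Type*} [Group G] [Fintype G] (X : Finset G)
    (hproper : X ⊂ Finset.univ)
    (hbig : 3 * X.card ≥ 2 * Fintype.card G + 1)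
    (hcard : 4 ≤ Fintype.card G) :
    ¬ ∃ S : Set G, S.Nonempty ∧
      (X : Set G) * S = Set.univ ∧
      (∀ a ∈ (X : Set G), ((X : Set G) \ {a}) * S ≠ Set.univ) ∧
      (∀ b ∈ S, (X : Set G) * (S \ {b}) ≠ Set.univ) := by
  classical
  rintro ⟨S, hSne, hcover, hAmin, -⟩
  by_cases hbc : ∃ b ∈ S, ∃ c ∈ S, b ≠ c
  · obtain ⟨b, hb, c, hc, hbcne⟩ := hbc
    have key : ∀ a : G, ∃ h : G, a ∈ X → ∀ s ∈ S, ∀ x ∈ X, x * s = h → x = a := by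
      intro a
      by_cases ha : a ∈ X
      · have hne := hAmin a (Finset.mem_coe.mpr ha)
        rw [Ne, Set.eq_univ_iff_forall] at hne
        push_neg at hne
        obtain ⟨h, hh⟩ := hne
        refine ⟨h, fun _ s hs x hx hxs => ?_⟩
        by_contra hxa
        have hmem : x * s ∈ ((X : Set G) \ {a}) * S :=
          Set.mul_mem_mul ⟨Finset.mem_coe.mpr hx, hxa⟩ hs
        rw [hxs] at hmem
        exact hh hmem
      · exact ⟨1, fun h => absurd h ha⟩
    choose f hf using key
    set I : Finset G := (X.image (· * b)) ∩ (X.image (· * c)) with hI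
    have hinj : Set.InjOn f (X : Set G) := by
      intro a ha a' ha' hfa
      have hmem : f a ∈ (X : Set G) * S := by rw [hcover]; trivial
      rw [Set.mem_mul] at hmem
      obtain ⟨x, hx, s, hs, hxs⟩ := hmem
      have h1 := hf a (Finset.mem_coe.mp ha) s hs x (Finset.mem_coe.mp hx) hxs
      have h2 := hf a' (Finset.mem_coe.mp ha') s hs x (Finset.mem_coe.mp hx)
        (by rw [hxs, hfa])
      rw [← h1, ← h2]
    have hmaps : ∀ a ∈ X, f a ∈ Finset.univ \ I := by
      intro a ha
      simp only [hI, Finset.mem_sdiff, Finset.mem_univ, true_and, Finset.mem_inter,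
        Finset.mem_image, not_and]
      rintro ⟨x1, hx1, hx1e⟩ ⟨x2, hx2, hx2e⟩
      have h1 := hf a ha b hb x1 hx1 hx1e
      have h2 := hf a ha c hc x2 hx2 hx2e
      subst h1 h2
      exact hbcne (mul_left_cancel (hx1e.trans hx2e.symm))
    have hcard1 : X.card ≤ (Finset.univ \ I).card :=
      Finset.card_le_card_of_injOn f hmaps hinj
    have hXb : (X.image (· * b)).card = X.card :=
      Finset.card_image_of_injective _ (fun x y h => by simpa using h)
    have hXc : (X.image (· * c)).card = X.card :=
      Finset.card_image_of_injective _ (fun x y h => by simpa using h)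
    have hunion : ((X.image (· * b)) ∪ (X.image (· * c))).card + I.card
        = X.card + X.card := by
      rw [hI, Finset.card_union_add_card_inter, hXb, hXc]
    have h1 : ((X.image (· * b)) ∪ (X.image (· * c))).card ≤ Fintype.card G :=
      (Finset.card_le_univ _).trans_eq Finset.card_univ
    have h2 : (Finset.univ \ I).card = Fintype.card G - I.card := by
      rw [Finset.card_sdiff_of_subset (Finset.subset_univ _), Finset.card_univ]
    have h3 : I.card ≤ Fintype.card G :=
      (Finset.card_le_univ _).trans_eq Finset.card_univ
    omega
  · push_neg at hbc
    obtain ⟨b, hb⟩ := hSne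
    have hXuniv : X = Finset.univ := by
      apply Finset.eq_univ_iff_forall.mpr
      intro g
      have hmem : g * b ∈ (X : Set G) * S := by rw [hcover]; trivial
      rw [Set.mem_mul] at hmem
      obtain ⟨x, hx, s, hs, hxs⟩ := hmem
      have hsb : s = b := hbc s hs b hb
      rw [hsb] at hxs
      have : x = g := mul_right_cancel hxs
      rw [← this]
      exact Finset.mem_coe.mp hx
    exact absurd hXuniv (Finset.ssubset_univ_iff.mp hproper)
end

section
/- Let G be an infinite group and A a subset of G whose set-theoretic complement G \ A is finite and nonempty. Then A cannot be a minimal left complement to any nonempty subset of G. -/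
open Pointwise

theorem stmt_12 {G : Type*} [Group G] [Infinite G] (A : Set G)
    (hfin : (Set.univ \ A).Finite) (hne : (Set.univ \ A).Nonempty) :
    ∀ B : Set G, B.Nonempty →
      ¬ (A * B = Set.univ ∧ ∀ a ∈ A, (A \ {a}) * B ≠ Set.univ) := by
  rintro B ⟨b0, hb0⟩ ⟨hcov, hmin⟩
  obtain ⟨c, hc⟩ := hne
  have hmem : ∀ z : G, z ∈ A * B := by
    intro z; rw [hcov]; trivial
  by_cases hB : ∃ b ∈ B, b ≠ b0
  · obtain ⟨b1, hb1, hb10⟩ := hB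
    have hAinf : A.Infinite := by
      intro hAfin
      have : (Set.univ : Set G).Finite := by
        have := hAfin.union hfin
        simpa [Set.union_diff_cancel, Set.union_comm] using this
      exact Set.infinite_univ this
    have h1 : ∀ a ∈ A, ∃ g, ∀ x ∈ A, ∀ b ∈ B, x * b = g → x = a := by
      intro a ha
      have h := hmin a ha
      rw [Set.ne_univ_iff_exists_notMem] at h
      obtain ⟨g, hg⟩ := h
      refine ⟨g, fun x hx b hb hxb => ?_⟩
      by_contra hxa
      exact hg ⟨x, ⟨hx, hxa⟩, b, hb, hxb⟩
    choose! g hg using h1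
    have hinj : Set.InjOn g A := by
      intro a ha a' ha' hga
      obtain ⟨x, hx, b, hb, hxb⟩ := hmem (g a)
      have e1 := hg a ha x hx b hb hxb
      have e2 := hg a' ha' x hx b hb (by rw [show x*b = g a from hxb, hga])
      rw [← e1, ← e2]
    have hmaps : Set.MapsTo g A ((Set.univ \ A) * {b0, b1}) := by
      intro a ha
      by_cases h0 : g a * b0⁻¹ ∈ A
      · have e0 : g a * b0⁻¹ = a := hg a ha _ h0 b0 hb0 (by group)
        by_cases h1' : g a * b1⁻¹ ∈ A
        · have e1 : g a * b1⁻¹ = a := hg a ha _ h1' b1 hb1 (by group)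
          exact absurd (inv_injective (mul_left_cancel (e1.trans e0.symm))) hb10
        · exact ⟨g a * b1⁻¹, ⟨trivial, h1'⟩, b1, by simp, by group⟩
      · exact ⟨g a * b0⁻¹, ⟨trivial, h0⟩, b0, by simp, by group⟩
    have hSfin : ((Set.univ \ A) * ({b0, b1} : Set G)).Finite :=
      hfin.mul (Set.toFinite _)
    exact (hAinf.image hinj) (hSfin.subset (Set.image_subset_iff.mpr hmaps))
  · push_neg at hB
    obtain ⟨x, hx, b, hb, hxb⟩ := hmem (c * b0)
    have hbb : b = b0 := hB b hb
    subst hbb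
    have hxc : x = c := mul_right_cancel hxb
    exact hc.2 (hxc ▸ hx)
end

section
/- Let H be a subgroup of a group G and let {g_λ}_{λ∈Λ} be a complete set of distinct left coset representatives of H in G. Then ({g_λ}_{λ∈Λ}, H) is a co-minimal pair in G. -/
open Pointwise

theorem stmt_13 {G : Type*} [Group G] (H : Subgroup G) (R : Set G)
    (hrep : ∀ g : G, ∃! r, r ∈ R ∧ g⁻¹ * r ∈ H) :
    R * (H : Set G) = Set.univ ∧
    (∀ r ∈ R, (R \ {r}) * (H : Set G) ≠ Set.univ) ∧
    (∀ x ∈ (H : Set G), R * ((H : Set G) \ {x}) ≠ Set.univ) := by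
  refine ⟨?_, ?_, ?_⟩
  · ext g
    simp only [Set.mem_univ, iff_true]
    obtain ⟨r, ⟨hrR, hrH⟩, -⟩ := hrep g
    exact ⟨r, hrR, r⁻¹ * g, by simpa using H.inv_mem hrH, by group⟩
  · intro r hr hcon
    have : r ∈ (R \ {r}) * (H : Set G) := hcon ▸ Set.mem_univ r
    obtain ⟨r', ⟨hr'R, hr'ne⟩, h, hh, heq⟩ := this
    obtain ⟨w, -, huniq⟩ := hrep r
    have h1 : r' = w := huniq r' ⟨hr'R, by
      have : r⁻¹ * r' = h⁻¹ := by rw [← heq]; group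
      rw [this]; exact H.inv_mem hh⟩
    have h2 : r = w := huniq r ⟨hr, by simpa using H.one_mem⟩
    exact hr'ne (h1.trans h2.symm)
  · intro x hx hcon
    obtain ⟨r₀, ⟨hr₀R, -⟩, -⟩ := hrep 1
    have : r₀ * x ∈ R * ((H : Set G) \ {x}) := hcon ▸ Set.mem_univ _
    obtain ⟨r, hrR, h, ⟨hh, hhne⟩, heq⟩ := this
    obtain ⟨w, -, huniq⟩ := hrep (r₀ * x)
    have h1 : r = w := huniq r ⟨hrR, by
      have : (r₀ * x)⁻¹ * r = h⁻¹ := by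
        rw [eq_inv_iff_mul_eq_one]; rw [← heq]; group
      rw [this]; exact H.inv_mem hh⟩
    have h2 : r₀ = w := huniq r₀ ⟨hr₀R, by
      have : (r₀ * x)⁻¹ * r₀ = x⁻¹ := by group
      rw [this]; exact H.inv_mem hx⟩
    have : r₀ * x = r₀ * h := by rw [← heq, h1, ← h2]
    exact hhne (by simpa using (mul_left_cancel this).symm)
end

section
/- Let X be a nonempty subset of a group G that properly contains a left translate of itself, i.e., gX ⊊ X for some g ∈ G. Then X is not a minimal left complement to any nonempty subset Y of G, so (X, Y) is not a co-minimal pair for any Y. -/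
open Pointwise

theorem stmt_14 {G : Type*} [Group G] (X : Set G) (hne : X.Nonempty)
    (g : G) (hsub : (g * ·) '' X ⊂ X) :
    ∀ Y : Set G, Y.Nonempty →
      ¬ (X * Y = Set.univ ∧ ∀ x ∈ X, (X \ {x}) * Y ≠ Set.univ) := by
  rintro Y hY ⟨hXY, hmin⟩
  obtain ⟨x₀, hx₀X, hx₀⟩ := Set.exists_of_ssubset hsub
  apply hmin x₀ hx₀X
  apply Set.eq_univ_of_forall
  intro u
  have : g⁻¹ * u ∈ X * Y := by rw [hXY]; trivial
  obtain ⟨x, hx, y, hy, hxy⟩ := this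
  refine ⟨g * x, ⟨hsub.1 ⟨x, hx, rfl⟩, ?_⟩, y, hy, ?_⟩
  · simp only [Set.mem_singleton_iff]
    rintro rfl
    exact hx₀ ⟨x, hx, rfl⟩
  · simp only [] at hxy ⊢; rw [mul_assoc, hxy, mul_inv_cancel_left]
end

section
/- For an element x of a group G, the set {x, x², x³, …} of positive powers of x is part of a co-minimal pair (A, B) with B = {x, x², x³, …} if and only if x has finite order. -/
open Pointwise

theorem stmt_15 {G : Type*} [Group G] (x : G) :
    (∃ A : Set G, A.Nonempty ∧
      A * {y : G | ∃ n : ℕ, 1 ≤ n ∧ y = x ^ n} = Set.univ ∧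
      (∀ a ∈ A, (A \ {a}) * {y : G | ∃ n : ℕ, 1 ≤ n ∧ y = x ^ n} ≠ Set.univ) ∧
      (∀ b ∈ {y : G | ∃ n : ℕ, 1 ≤ n ∧ y = x ^ n},
        A * ({y : G | ∃ n : ℕ, 1 ≤ n ∧ y = x ^ n} \ {b}) ≠ Set.univ))
    ↔ IsOfFinOrder x := by
  set S : Set G := {y : G | ∃ n : ℕ, 1 ≤ n ∧ y = x ^ n} with hSdef
  constructor
  · rintro ⟨A, -, hAB, -, hmin⟩
    by_contra hinf
    have hinj : Function.Injective (fun n : ℕ ↦ x ^ n) :=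
      injective_pow_iff_not_isOfFinOrder.mpr hinf
    have hxS : x ∈ S := ⟨1, le_refl 1, (pow_one x).symm⟩
    obtain ⟨g, hg⟩ := (Set.ne_univ_iff_exists_notMem _).mp (hmin x hxS)
    have hrep : ∀ a ∈ A, ∀ n : ℕ, 1 ≤ n → g = a * x ^ n → n = 1 := by
      intro a ha n hn hgn
      by_contra hne
      refine hg ⟨a, ha, x ^ n, ⟨⟨n, hn, rfl⟩, ?_⟩, hgn.symm⟩
      simp only [Set.mem_singleton_iff]
      intro h
      exact hne (hinj (by simpa [pow_one] using h))
    have hgx : g * x⁻¹ ∈ A * S := by rw [hAB]; trivial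
    obtain ⟨a', ha', y', ⟨m, hm, rfl⟩, ham⟩ := hgx
    have ham' : a' * x ^ m = g * x⁻¹ := ham
    have hgeq : g = a' * x ^ (m + 1) := by
      rw [pow_succ, ← mul_assoc, ham', inv_mul_cancel_right]
    have := hrep a' ha' (m + 1) (by omega) hgeq
    omega
  · intro hx
    set H : Subgroup G := Subgroup.zpowers x with hHdef
    have hSH : S = (H : Set G) := by
      ext y
      constructor
      · rintro ⟨n, hn, rfl⟩
        exact ⟨(n : ℤ), by simp⟩
      · intro hy
        obtain ⟨n, rfl⟩ := hx.mem_powers_iff_mem_zpowers.mpr hy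
        rcases Nat.eq_zero_or_pos n with h0 | h0
        · refine ⟨orderOf x, hx.orderOf_pos, ?_⟩
          show x ^ n = x ^ orderOf x
          rw [h0, pow_zero, pow_orderOf_eq_one]
        · exact ⟨n, h0, rfl⟩
    refine ⟨Set.range (fun q : G ⧸ H => q.out), Set.range_nonempty _, ?_, ?_, ?_⟩
    · apply Set.eq_univ_of_forall
      intro g
      refine ⟨(QuotientGroup.mk g : G ⧸ H).out, ⟨_, rfl⟩, (QuotientGroup.mk g : G ⧸ H).out⁻¹ * g,
        ?_, mul_inv_cancel_left _ _⟩
      rw [hSH]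
      exact QuotientGroup.eq.mp (QuotientGroup.out_eq' _)
    · rintro a ⟨q, rfl⟩ habs
      have hmem : q.out ∈ (Set.range (fun q : G ⧸ H => q.out) \ {q.out}) * S := by
        rw [habs]; trivial
      obtain ⟨a', ⟨⟨q', rfl⟩, hne⟩, s, hs, heq⟩ := hmem
      apply hne
      rw [hSH] at hs
      have heq' : q'.out * s = q.out := heq
      have hmk : (QuotientGroup.mk (q'.out) : G ⧸ H) = QuotientGroup.mk q.out := by
        rw [← heq']
        exact (QuotientGroup.mk_mul_of_mem _ hs).symm
      rw [QuotientGroup.out_eq', QuotientGroup.out_eq'] at hmk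
      show q'.out ∈ ({q.out} : Set G)
      rw [hmk]
      rfl
    · rintro b hb habs
      have hbH : b ∈ H := by rw [hSH] at hb; exact hb
      obtain ⟨a, q, rfl⟩ : ∃ a : G, ∃ q : G ⧸ H, q.out = a :=
        ⟨(QuotientGroup.mk (1 : G) : G ⧸ H).out, _, rfl⟩
      have hmem : q.out * b ∈ Set.range (fun q : G ⧸ H => q.out) * (S \ {b}) := by
        rw [habs]; trivial
      obtain ⟨a', ⟨q', rfl⟩, s, ⟨hs, hsb⟩, heq⟩ := hmem
      rw [hSH] at hs
      have heq' : q'.out * s = q.out * b := heq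
      have hmk : (QuotientGroup.mk (q'.out) : G ⧸ H) = QuotientGroup.mk q.out := by
        have h1 : (QuotientGroup.mk (q'.out * s) : G ⧸ H) = QuotientGroup.mk q'.out :=
          QuotientGroup.mk_mul_of_mem _ hs
        have h2 : (QuotientGroup.mk (q.out * b) : G ⧸ H) = QuotientGroup.mk q.out :=
          QuotientGroup.mk_mul_of_mem _ hbH
        rw [← h1, ← h2, heq']
      rw [QuotientGroup.out_eq', QuotientGroup.out_eq'] at hmk
      rw [hmk] at heq'
      exact hsb (mul_left_cancel heq')
end

section
/- Let I be a nonempty index set and for each i ∈ I let (A_i, B_i) be a co-minimal pair in a group G_i. Then (∏_{i∈I} A_i, ∏_{i∈I} B_i) is a co-minimal pair in the direct product group ∏_{i∈I} G_i. -/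
open Pointwise

theorem stmt_16 {I : Type*} [Nonempty I] (G : I → Type*) [∀ i, Group (G i)]
    (A B : ∀ i, Set (G i))
    (hcomp : ∀ i, A i * B i = Set.univ)
    (hA : ∀ i, ∀ a ∈ A i, (A i \ {a}) * B i ≠ Set.univ)
    (hB : ∀ i, ∀ b ∈ B i, A i * (B i \ {b}) ≠ Set.univ) :
    (Set.pi Set.univ A) * (Set.pi Set.univ B) = Set.univ ∧
    (∀ a ∈ Set.pi Set.univ A,
      ((Set.pi Set.univ A) \ {a}) * (Set.pi Set.univ B) ≠ Set.univ) ∧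
    (∀ b ∈ Set.pi Set.univ B,
      (Set.pi Set.univ A) * ((Set.pi Set.univ B) \ {b}) ≠ Set.univ) := by
  refine ⟨?_, ?_, ?_⟩
  · ext g
    simp only [Set.mem_univ, iff_true]
    have h : ∀ i, ∃ a ∈ A i, ∃ b ∈ B i, a * b = g i := by
      intro i
      have hg : g i ∈ A i * B i := by rw [hcomp i]; trivial
      exact Set.mem_mul.mp hg
    choose a ha b hb hab using h
    exact Set.mem_mul.mpr ⟨a, fun i _ => ha i, b, fun i _ => hb i, funext hab⟩
  · intro a haA hcon
    have h : ∀ i, ∃ g, g ∉ (A i \ {a i}) * B i := by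
      intro i
      by_contra h
      push_neg at h
      exact hA i (a i) (haA i trivial) (Set.eq_univ_of_forall h)
    choose g hg using h
    have hgmem : g ∈ (Set.pi Set.univ A \ {a}) * Set.pi Set.univ B := by
      rw [hcon]; trivial
    obtain ⟨a', ha', b, hb, hab⟩ := Set.mem_mul.mp hgmem
    have heq : ∀ i, a' i = a i := by
      intro i
      by_contra hne
      exact hg i (Set.mem_mul.mpr ⟨a' i, ⟨ha'.1 i trivial, hne⟩, b i, hb i trivial,
        congrFun hab i⟩)
    exact ha'.2 (funext heq)
  · intro b hbB hcon
    have h : ∀ i, ∃ g, g ∉ A i * (B i \ {b i}) := by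
      intro i
      by_contra h
      push_neg at h
      exact hB i (b i) (hbB i trivial) (Set.eq_univ_of_forall h)
    choose g hg using h
    have hgmem : g ∈ Set.pi Set.univ A * (Set.pi Set.univ B \ {b}) := by
      rw [hcon]; trivial
    obtain ⟨a, ha, b', hb', hab⟩ := Set.mem_mul.mp hgmem
    have heq : ∀ i, b' i = b i := by
      intro i
      by_contra hne
      exact hg i (Set.mem_mul.mpr ⟨a i, ha i trivial, b' i, ⟨hb'.1 i trivial, hne⟩,
        congrFun hab i⟩)
    exact hb'.2 (funext heq)
end

section
/- Let G be an abelian group with subgroups G₁, G₂ such that the map G₁ × G₂ → G, (g₁, g₂) ↦ g₁ + g₂, is a group isomorphism. For a subset B of G₁, the subset B + G₂ of G is part of a co-minimal pair in G if and only if B is part of a co-minimal pair in G₁. -/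
open Pointwise

theorem stmt_17 {G : Type*} [AddCommGroup G] (G₁ G₂ : AddSubgroup G)
    (hiso : ∀ g : G, ∃! p : G₁ × G₂, (p.1 : G) + (p.2 : G) = g)
    (B : Set G) (hB : B ⊆ (G₁ : Set G)) (hBne : B.Nonempty) :
    (∃ S : Set G, S.Nonempty ∧
      (B + (G₂ : Set G)) + S = Set.univ ∧
      (∀ a ∈ B + (G₂ : Set G), ((B + (G₂ : Set G)) \ {a}) + S ≠ Set.univ) ∧
      (∀ s ∈ S, (B + (G₂ : Set G)) + (S \ {s}) ≠ Set.univ))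
    ↔
    (∃ M : Set G, M ⊆ (G₁ : Set G) ∧ M.Nonempty ∧
      B + M = (G₁ : Set G) ∧
      (∀ b ∈ B, (B \ {b}) + M ≠ (G₁ : Set G)) ∧
      (∀ m ∈ M, B + (M \ {m}) ≠ (G₁ : Set G))) := by
  classical
  choose p hp hup using hiso
  -- uniqueness of decompositions
  have uniq : ∀ a a' c c' : G, a ∈ G₁ → a' ∈ G₁ → c ∈ G₂ → c' ∈ G₂ →
      a + c = a' + c' → a = a' ∧ c = c' := by
    intro a a' c c' ha ha' hc hc' h
    have h1 : (⟨⟨a, ha⟩, ⟨c, hc⟩⟩ : G₁ × G₂) = p (a + c) := hup (a + c) _ rfl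
    have h2 : (⟨⟨a', ha'⟩, ⟨c', hc'⟩⟩ : G₁ × G₂) = p (a + c) := hup (a + c) _ h.symm
    have h3 : (⟨⟨a, ha⟩, ⟨c, hc⟩⟩ : G₁ × G₂) = ⟨⟨a', ha'⟩, ⟨c', hc'⟩⟩ := h1.trans h2.symm
    exact ⟨congrArg (fun q : G₁ × G₂ => (q.1 : G)) h3,
      congrArg (fun q : G₁ × G₂ => (q.2 : G)) h3⟩
  have key1 : ∀ (b s1 s2 g1 g2 s g : G), s1 + s2 = s → g1 + g2 = g → b + s1 = g1 →
      b + (g2 - s2) + s = g := by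
    intro b s1 s2 g1 g2 s g h1 h2 h3
    subst h1 h2 h3
    abel
  have key2 : ∀ (b m g1 g2 g : G), g1 + g2 = g → b + m = g1 → b + g2 + m = g := by
    intro b m g1 g2 g h1 h2
    subst h1 h2
    abel
  constructor
  · rintro ⟨S, hSne, hcov, hAmin, hSmin⟩
    refine ⟨(fun g => ((p g).1 : G)) '' S, ?_, hSne.image _, ?_, ?_, ?_⟩
    · rintro _ ⟨s, -, rfl⟩
      exact (p s).1.2
    · -- B + π₁(S) = G₁
      apply Set.Subset.antisymm
      · intro x hx
        obtain ⟨b, hb, m, hm, rfl⟩ := Set.mem_add.1 hx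
        obtain ⟨s, -, rfl⟩ := hm
        exact G₁.add_mem (hB hb) (p s).1.2
      · intro x hx
        have hx2 : x ∈ (B + (G₂ : Set G)) + S := by rw [hcov]; trivial
        obtain ⟨a, ha, s, hs, hsum⟩ := Set.mem_add.1 hx2
        obtain ⟨b, hb, c, hc, rfl⟩ := Set.mem_add.1 ha
        have hdec : (b + ((p s).1 : G)) + (c + ((p s).2 : G)) = x + 0 := by
          rw [← hp s] at hsum
          rw [← hsum]; abel
        have h1 := (uniq _ x _ 0 (G₁.add_mem (hB hb) (p s).1.2) hx
          (G₂.add_mem hc (p s).2.2) G₂.zero_mem hdec).1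
        exact Set.mem_add.2 ⟨b, hb, _, ⟨s, hs, rfl⟩, h1⟩
    · -- minimality of B
      intro b hb hcon
      apply hAmin b (Set.mem_add.2 ⟨b, hb, 0, G₂.zero_mem, add_zero b⟩)
      rw [Set.eq_univ_iff_forall]
      intro g
      have hg1 : ((p g).1 : G) ∈ (B \ {b}) + ((fun g => ((p g).1 : G)) '' S) := by
        rw [hcon]; exact (p g).1.2
      obtain ⟨b', hb', m, hm, hsum⟩ := Set.mem_add.1 hg1
      obtain ⟨s, hs, rfl⟩ := hm
      refine Set.mem_add.2 ⟨b' + (((p g).2 : G) - ((p s).2 : G)), ⟨?_, ?_⟩, s, hs, ?_⟩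
      · exact Set.mem_add.2 ⟨b', hb'.1, _, G₂.sub_mem (p g).2.2 (p s).2.2, rfl⟩
      · intro heq
        rw [Set.mem_singleton_iff] at heq
        have := (uniq b' b _ 0 (hB hb'.1) (hB hb)
          (G₂.sub_mem (p g).2.2 (p s).2.2) G₂.zero_mem (by rw [add_zero]; exact heq)).1
        exact hb'.2 (by rw [Set.mem_singleton_iff, this])
      · exact key1 b' _ _ _ _ s g (hp s) (hp g) hsum
    · -- minimality of π₁(S)
      rintro m hm hcon
      obtain ⟨s₀, hs₀, rfl⟩ := hm
      apply hSmin s₀ hs₀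
      rw [Set.eq_univ_iff_forall]
      intro g
      have hg1 : ((p g).1 : G) ∈ B + (((fun g => ((p g).1 : G)) '' S) \ {((p s₀).1 : G)}) := by
        rw [hcon]; exact (p g).1.2
      obtain ⟨b, hb, m, hm, hsum⟩ := Set.mem_add.1 hg1
      obtain ⟨hmM, hmne⟩ := hm
      obtain ⟨s, hs, rfl⟩ := hmM
      have hsne : s ∉ ({s₀} : Set G) := by
        intro h
        rw [Set.mem_singleton_iff] at h
        exact hmne (by rw [Set.mem_singleton_iff, h])
      refine Set.mem_add.2 ⟨b + (((p g).2 : G) - ((p s).2 : G)),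
        Set.mem_add.2 ⟨b, hb, _, G₂.sub_mem (p g).2.2 (p s).2.2, rfl⟩, s, ⟨hs, hsne⟩, ?_⟩
      exact key1 b _ _ _ _ s g (hp s) (hp g) hsum
  · rintro ⟨M, hMG, hMne, hcov, hBmin, hMmin⟩
    refine ⟨M, hMne, ?_, ?_, ?_⟩
    · -- (B + G₂) + M = univ
      rw [Set.eq_univ_iff_forall]
      intro g
      have hg1 : ((p g).1 : G) ∈ B + M := by rw [hcov]; exact (p g).1.2
      obtain ⟨b, hb, m, hm, hsum⟩ := Set.mem_add.1 hg1
      exact Set.mem_add.2 ⟨b + ((p g).2 : G),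
        Set.mem_add.2 ⟨b, hb, _, (p g).2.2, rfl⟩, m, hm, key2 b m _ _ g (hp g) hsum⟩
    · -- minimality of B + G₂
      rintro a ha hcon
      obtain ⟨b, hb, c, hc, rfl⟩ := Set.mem_add.1 ha
      apply hBmin b hb
      apply Set.Subset.antisymm
      · intro x hx
        obtain ⟨b', hb', m, hm, rfl⟩ := Set.mem_add.1 hx
        exact G₁.add_mem (hB hb'.1) (hMG hm)
      · intro x hx
        have hx2 : x + c ∈ ((B + (G₂ : Set G)) \ {b + c}) + M := by rw [hcon]; trivial
        obtain ⟨a', ⟨ha', hane⟩, m, hm, hsum⟩ := Set.mem_add.1 hx2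
        obtain ⟨b', hb', c', hc', rfl⟩ := Set.mem_add.1 ha'
        have hu := uniq (b' + m) x c' c (G₁.add_mem (hB hb') (hMG hm)) hx hc' hc
          (by rw [← hsum]; abel)
        have hb'b : b' ∉ ({b} : Set G) := by
          intro h
          rw [Set.mem_singleton_iff] at h
          exact hane (by rw [Set.mem_singleton_iff, h, hu.2])
        exact Set.mem_add.2 ⟨b', ⟨hb', hb'b⟩, m, hm, hu.1⟩
    · -- minimality of M
      rintro m hm hcon
      apply hMmin m hm
      apply Set.Subset.antisymm
      · intro x hx
        obtain ⟨b, hb, m', hm', rfl⟩ := Set.mem_add.1 hx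
        exact G₁.add_mem (hB hb) (hMG hm'.1)
      · intro x hx
        have hx2 : x ∈ (B + (G₂ : Set G)) + (M \ {m}) := by rw [hcon]; trivial
        obtain ⟨a', ha', m', hm', hsum⟩ := Set.mem_add.1 hx2
        obtain ⟨b, hb, c, hc, rfl⟩ := Set.mem_add.1 ha'
        have hu := uniq (b + m') x c 0 (G₁.add_mem (hB hb) (hMG hm'.1)) hx hc G₂.zero_mem
          (by rw [← hsum, add_zero]; abel)
        exact Set.mem_add.2 ⟨b, hb, m', hm', hu.1⟩
end

section
/- The subset A = ℤ_{≥0}^d of ℤ^d (d ≥ 1) does not admit a minimal complement in ℤ^d, and A is not a minimal complement to any subset of ℤ^d. In particular, A does not belong to any minimal pair. -/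
open Pointwise

theorem stmt_18 (d : ℕ) (hd : 1 ≤ d) :
    (¬ ∃ B : Set (Fin d → ℤ), B.Nonempty ∧
      {v : Fin d → ℤ | ∀ i, 0 ≤ v i} + B = Set.univ ∧
      ∀ b ∈ B, {v : Fin d → ℤ | ∀ i, 0 ≤ v i} + (B \ {b}) ≠ Set.univ) ∧
    (¬ ∃ B : Set (Fin d → ℤ), B.Nonempty ∧
      {v : Fin d → ℤ | ∀ i, 0 ≤ v i} + B = Set.univ ∧
      ∀ a ∈ {v : Fin d → ℤ | ∀ i, 0 ≤ v i},
        ({v : Fin d → ℤ | ∀ i, 0 ≤ v i} \ {a}) + B ≠ Set.univ) := by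
  have i0 : Fin d := ⟨0, hd⟩
  constructor
  · rintro ⟨B, hBne, hAB, hmin⟩
    obtain ⟨b, hb⟩ := hBne
    apply hmin b hb
    ext x
    simp only [Set.mem_univ, iff_true]
    set n : ℤ := (x i0 - b i0).toNat + 1 with hn
    have hy : (fun i => x i - n) ∈ {v : Fin d → ℤ | ∀ i, 0 ≤ v i} + B := by
      rw [hAB]; trivial
    rw [Set.mem_add] at hy
    obtain ⟨a, ha, b', hb', hab⟩ := hy
    have ha0 := ha i0
    have h0 := congrFun hab i0
    simp only [Pi.add_apply] at h0
    have hb'b : b' ≠ b := by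
      intro h
      rw [h] at h0
      omega
    rw [Set.mem_add]
    refine ⟨a + fun _ => n, ?_, b', ⟨hb', by simpa using hb'b⟩, ?_⟩
    · intro i
      have := ha i
      simp only [Pi.add_apply]
      omega
    · funext i
      have := congrFun hab i
      simp only [Pi.add_apply] at this ⊢
      omega
  · rintro ⟨B, hBne, hAB, hmin⟩
    apply hmin 0 (fun i => le_refl 0)
    ext x
    simp only [Set.mem_univ, iff_true]
    have hy : (fun i => x i - 1) ∈ {v : Fin d → ℤ | ∀ i, 0 ≤ v i} + B := by
      rw [hAB]; trivial
    rw [Set.mem_add] at hy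
    obtain ⟨a, ha, b', hb', hab⟩ := hy
    rw [Set.mem_add]
    refine ⟨a + fun _ => 1, ⟨?_, ?_⟩, b', hb', ?_⟩
    · intro i
      have := ha i
      simp only [Pi.add_apply]
      omega
    · simp only [Set.mem_singleton_iff]
      intro h
      have := congrFun h i0
      have := ha i0
      simp only [Pi.add_apply, Pi.zero_apply] at *
      omega
    · funext i
      have := congrFun hab i
      simp only [Pi.add_apply] at this ⊢
      omega
end
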